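/- Subset repairs of G with respect to a set R of positive node expressions are computed by iterated node removal: define the decreasing sequence G₀ = G, G_{k+1} = the induced subgraph of G_k on the nodes v of G_k satisfying v ∈ ⟦φ⟧_{G_k} for all φ ∈ R. Then the sequence stabilizes after at most |V_G| steps at a data-graph G_∞ which is the unique subset repair of G with respect to R. -/

import Mathlib

/-- A data-graph: a set of nodes, an edge labeling, and a data-value assignment. -/
structure DataGraph (V E Dv : Type) where
  nodes : Set V
  edges : V → V → Set E
  data : V → Dv

mutual
/-- Reg-GXPath path expressions. -/
inductive PExp (E Dv : Type) where
  | eps : PExp E Dv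
  | wild : PExp E Dv
  | lab : E → PExp E Dv
  | inv : E → PExp E Dv
  | test : NExp E Dv → PExp E Dv
  | comp : PExp E Dv → PExp E Dv → PExp E Dv
  | union : PExp E Dv → PExp E Dv → PExp E Dv
  | inter : PExp E Dv → PExp E Dv → PExp E Dv
  | star : PExp E Dv → PExp E Dv
  | compl : PExp E Dv → PExp E Dv
  | iter : PExp E Dv → ℕ → ℕ → PExp E Dv
/-- Reg-GXPath node expressions. -/
inductive NExp (E Dv : Type) where
  | neg : NExp E Dv → NExp E Dv
  | and : NExp E Dv → NExp E Dv → NExp E Dv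
  | or : NExp E Dv → NExp E Dv → NExp E Dv
  | diam : PExp E Dv → NExp E Dv
  | eqc : Dv → NExp E Dv
  | neqc : Dv → NExp E Dv
  | cmpEq : PExp E Dv → PExp E Dv → NExp E Dv
  | cmpNeq : PExp E Dv → PExp E Dv → NExp E Dv
end

variable {V E Dv : Type}

/-- Relational composition of binary relations presented as sets of pairs. -/
def dgComp (R S : Set (V × V)) : Set (V × V) := {p | ∃ y, (p.1, y) ∈ R ∧ (y, p.2) ∈ S}

/-- The identity relation on the nodes of a data-graph. -/
def DataGraph.idRel (G : DataGraph V E Dv) : Set (V × V) := {p | p.1 = p.2 ∧ p.1 ∈ G.nodes}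

/-- Iterated relational composition, with `I` as the 0-th power (identity). -/
def dgPow (I R : Set (V × V)) : ℕ → Set (V × V)
  | 0 => I
  | k + 1 => dgComp (dgPow I R k) R

mutual
/-- Semantics of path expressions on a data-graph: a set of pairs of nodes. -/
def psem (G : DataGraph V E Dv) : PExp E Dv → Set (V × V)
  | .eps => G.idRel
  | .wild => {p | p.1 ∈ G.nodes ∧ p.2 ∈ G.nodes ∧ (G.edges p.1 p.2).Nonempty}
  | .lab a => {p | p.1 ∈ G.nodes ∧ p.2 ∈ G.nodes ∧ a ∈ G.edges p.1 p.2}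
  | .inv a => {p | p.1 ∈ G.nodes ∧ p.2 ∈ G.nodes ∧ a ∈ G.edges p.2 p.1}
  | .test φ => {p | p.1 = p.2 ∧ p.1 ∈ nsem G φ}
  | .comp α β => dgComp (psem G α) (psem G β)
  | .union α β => psem G α ∪ psem G β
  | .inter α β => psem G α ∩ psem G β
  | .star α => G.idRel ∪ {p | Relation.TransGen (fun x y => (x, y) ∈ psem G α) p.1 p.2}
  | .compl α => {p | p.1 ∈ G.nodes ∧ p.2 ∈ G.nodes ∧ p ∉ psem G α}
  | .iter α n m => {p | ∃ k, n ≤ k ∧ k ≤ m ∧ p ∈ dgPow G.idRel (psem G α) k}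
/-- Semantics of node expressions on a data-graph: a set of nodes. -/
def nsem (G : DataGraph V E Dv) : NExp E Dv → Set V
  | .neg φ => {v | v ∈ G.nodes ∧ v ∉ nsem G φ}
  | .and φ ψ => nsem G φ ∩ nsem G ψ
  | .or φ ψ => nsem G φ ∪ nsem G ψ
  | .diam α => {v | ∃ w, (v, w) ∈ psem G α}
  | .eqc c => {v | v ∈ G.nodes ∧ G.data v = c}
  | .neqc c => {v | v ∈ G.nodes ∧ G.data v ≠ c}
  | .cmpEq α β => {v | ∃ v' v'', (v, v') ∈ psem G α ∧ (v, v'') ∈ psem G β ∧ G.data v' = G.data v''}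
  | .cmpNeq α β => {v | ∃ v' v'', (v, v') ∈ psem G α ∧ (v, v'') ∈ psem G β ∧ G.data v' ≠ G.data v''}
end

mutual
/-- Positive (complement/negation-free) path expressions. -/
def PExp.Positive : PExp E Dv → Prop
  | .eps => True
  | .wild => True
  | .lab _ => True
  | .inv _ => True
  | .test φ => φ.Positive
  | .comp α β => α.Positive ∧ β.Positive
  | .union α β => α.Positive ∧ β.Positive
  | .inter α β => α.Positive ∧ β.Positive
  | .star α => α.Positive
  | .compl _ => False
  | .iter α _ _ => α.Positive
/-- Positive (negation-free) node expressions. -/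
def NExp.Positive : NExp E Dv → Prop
  | .neg _ => False
  | .and φ ψ => φ.Positive ∧ ψ.Positive
  | .or φ ψ => φ.Positive ∧ ψ.Positive
  | .diam α => α.Positive
  | .eqc _ => True
  | .neqc _ => True
  | .cmpEq α β => α.Positive ∧ β.Positive
  | .cmpNeq α β => α.Positive ∧ β.Positive
end

/-- `G.Subgraph G'` : `G` is a sub-data-graph of `G'`. -/
def DataGraph.Subgraph (G G' : DataGraph V E Dv) : Prop :=
  G.nodes ⊆ G'.nodes ∧ (∀ v ∈ G.nodes, ∀ w ∈ G.nodes, G.edges v w ⊆ G'.edges v w) ∧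
    ∀ v ∈ G.nodes, G.data v = G'.data v

/-- Consistency of a data-graph w.r.t. sets of path and node constraints. -/
def DataGraph.Consistent (G : DataGraph V E Dv)
    (Rp : Set (PExp E Dv)) (Rn : Set (NExp E Dv)) : Prop :=
  (∀ α ∈ Rp, ∀ v ∈ G.nodes, ∀ w ∈ G.nodes, (v, w) ∈ psem G α) ∧
    (∀ φ ∈ Rn, ∀ v ∈ G.nodes, v ∈ nsem G φ)

/-- `H` is a subset repair of `G` w.r.t. constraints `Rp ∪ Rn`. -/
def IsSubsetRepair (H G : DataGraph V E Dv)
    (Rp : Set (PExp E Dv)) (Rn : Set (NExp E Dv)) : Prop :=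
  H.Consistent Rp Rn ∧ H.Subgraph G ∧
    ∀ K : DataGraph V E Dv, K.Consistent Rp Rn → K.Subgraph G → H.Subgraph K → K.Subgraph H

/-- `H` is a superset repair of `G` w.r.t. constraints `Rp ∪ Rn`. -/
def IsSupersetRepair (H G : DataGraph V E Dv)
    (Rp : Set (PExp E Dv)) (Rn : Set (NExp E Dv)) : Prop :=
  H.Consistent Rp Rn ∧ G.Subgraph H ∧
    ∀ K : DataGraph V E Dv, K.Consistent Rp Rn → G.Subgraph K → K.Subgraph H → H.Subgraph K
/-- The sub-data-graph of `G` induced by the node set `S`. -/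
def DataGraph.induced {V E Dv : Type} (G : DataGraph V E Dv) (S : Set V) : DataGraph V E Dv :=
  ⟨G.nodes ∩ S,
   fun a b => {e | e ∈ G.edges a b ∧ a ∈ G.nodes ∩ S ∧ b ∈ G.nodes ∩ S},
   G.data⟩

/-- One removal step: keep only the nodes satisfying every node constraint in `R`. -/
def dgStep {V E Dv : Type} (R : Set (NExp E Dv)) (G : DataGraph V E Dv) : DataGraph V E Dv :=
  G.induced {v | ∀ φ ∈ R, v ∈ nsem G φ}

section Aux

variable {V E Dv : Type}

theorem dgPow_mono {I I' R S : Set (V × V)} (hI : I ⊆ I') (hR : R ⊆ S) :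
    ∀ k, dgPow I R k ⊆ dgPow I' S k
  | 0 => hI
  | k + 1 => fun p hp => by
      obtain ⟨y, h1, h2⟩ := hp
      exact ⟨y, dgPow_mono hI hR k h1, hR h2⟩

mutual

theorem psem_bdd (G : DataGraph V E Dv) : ∀ (α : PExp E Dv), ∀ p ∈ psem G α,
    p.1 ∈ G.nodes ∧ p.2 ∈ G.nodes
  | .eps => fun _ hp => ⟨hp.2, hp.1 ▸ hp.2⟩
  | .wild => fun _ hp => ⟨hp.1, hp.2.1⟩
  | .lab _ => fun _ hp => ⟨hp.1, hp.2.1⟩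
  | .inv _ => fun _ hp => ⟨hp.1, hp.2.1⟩
  | .test φ => fun p hp => ⟨nsem_bdd G φ p.1 hp.2, hp.1 ▸ nsem_bdd G φ p.1 hp.2⟩
  | .comp α β => fun p hp => by
      obtain ⟨y, h1, h2⟩ := hp
      exact ⟨(psem_bdd G α _ h1).1, (psem_bdd G β _ h2).2⟩
  | .union α β => fun p hp => hp.elim (psem_bdd G α p) (psem_bdd G β p)
  | .inter α _ => fun p hp => psem_bdd G α p hp.1
  | .star α => fun p hp => by
      obtain ⟨x, y⟩ := p
      show x ∈ G.nodes ∧ y ∈ G.nodes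
      rcases hp with h | h
      · obtain ⟨h1, h2⟩ := h
        simp only at h1 h2
        exact ⟨h2, h1 ▸ h2⟩
      · have h2 : Relation.TransGen (fun a b => (a, b) ∈ psem G α) x y := h
        clear h
        induction h2 with
        | single h' => exact ⟨(psem_bdd G α _ h').1, (psem_bdd G α _ h').2⟩
        | tail _ h' ih => exact ⟨ih.1, (psem_bdd G α _ h').2⟩
  | .compl _ => fun _ hp => ⟨hp.1, hp.2.1⟩
  | .iter α n m => fun p hp => by
      obtain ⟨k, -, -, hk⟩ := hp
      induction k generalizing p with
      | zero => exact ⟨hk.2, hk.1 ▸ hk.2⟩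
      | succ k ih =>
          obtain ⟨y, h1, h2⟩ := hk
          exact ⟨(ih _ h1).1, (psem_bdd G α _ h2).2⟩

theorem nsem_bdd (G : DataGraph V E Dv) : ∀ (φ : NExp E Dv), ∀ v ∈ nsem G φ, v ∈ G.nodes
  | .neg _ => fun _ hv => hv.1
  | .and φ _ => fun v hv => nsem_bdd G φ v hv.1
  | .or φ ψ => fun v hv => hv.elim (nsem_bdd G φ v) (nsem_bdd G ψ v)
  | .diam α => fun _ hv => by obtain ⟨w, hw⟩ := hv; exact (psem_bdd G α _ hw).1
  | .eqc _ => fun _ hv => hv.1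
  | .neqc _ => fun _ hv => hv.1
  | .cmpEq α _ => fun _ hv => by obtain ⟨a, b, h1, -, -⟩ := hv; exact (psem_bdd G α _ h1).1
  | .cmpNeq α _ => fun _ hv => by obtain ⟨a, b, h1, -, -⟩ := hv; exact (psem_bdd G α _ h1).1

end

theorem idRel_mono {H G : DataGraph V E Dv} (hs : H.Subgraph G) :
    H.idRel ⊆ G.idRel := fun _ hq => ⟨hq.1, hs.1 hq.2⟩

mutual

theorem psem_mono (H G : DataGraph V E Dv) (hs : H.Subgraph G) :
    ∀ (α : PExp E Dv), α.Positive → psem H α ⊆ psem G α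
  | .eps, _ => fun _ hp => ⟨hp.1, hs.1 hp.2⟩
  | .wild, _ => fun p hp =>
      ⟨hs.1 hp.1, hs.1 hp.2.1, Set.Nonempty.mono (hs.2.1 _ hp.1 _ hp.2.1) hp.2.2⟩
  | .lab _, _ => fun p hp => ⟨hs.1 hp.1, hs.1 hp.2.1, hs.2.1 _ hp.1 _ hp.2.1 hp.2.2⟩
  | .inv _, _ => fun p hp => ⟨hs.1 hp.1, hs.1 hp.2.1, hs.2.1 _ hp.2.1 _ hp.1 hp.2.2⟩
  | .test φ, hpos => fun _ hp => ⟨hp.1, nsem_mono H G hs φ hpos hp.2⟩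
  | .comp α β, hpos => fun p hp => by
      obtain ⟨y, h1, h2⟩ := hp
      exact ⟨y, psem_mono H G hs α hpos.1 h1, psem_mono H G hs β hpos.2 h2⟩
  | .union α β, hpos => fun p hp =>
      hp.elim (fun h => Or.inl (psem_mono H G hs α hpos.1 h))
        (fun h => Or.inr (psem_mono H G hs β hpos.2 h))
  | .inter α β, hpos => fun p hp =>
      ⟨psem_mono H G hs α hpos.1 hp.1, psem_mono H G hs β hpos.2 hp.2⟩
  | .star α, hpos => fun p hp => by
      rcases hp with h | h
      · exact Or.inl ⟨h.1, hs.1 h.2⟩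
      · exact Or.inr (Relation.TransGen.mono
          (fun x y hxy => psem_mono H G hs α hpos hxy) p.1 p.2 h)
  | .compl _, hpos => hpos.elim
  | .iter α n m, hpos => fun p hp => by
      obtain ⟨k, h1, h2, hk⟩ := hp
      exact ⟨k, h1, h2, dgPow_mono (idRel_mono hs)
        (psem_mono H G hs α hpos) k hk⟩

theorem nsem_mono (H G : DataGraph V E Dv) (hs : H.Subgraph G) :
    ∀ (φ : NExp E Dv), φ.Positive → nsem H φ ⊆ nsem G φ
  | .neg _, hpos => hpos.elim
  | .and φ ψ, hpos => fun v hv =>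
      ⟨nsem_mono H G hs φ hpos.1 hv.1, nsem_mono H G hs ψ hpos.2 hv.2⟩
  | .or φ ψ, hpos => fun v hv =>
      hv.elim (fun h => Or.inl (nsem_mono H G hs φ hpos.1 h))
        (fun h => Or.inr (nsem_mono H G hs ψ hpos.2 h))
  | .diam α, hpos => fun v hv => by
      obtain ⟨w, hw⟩ := hv
      exact ⟨w, psem_mono H G hs α hpos hw⟩
  | .eqc _, _ => fun v hv => ⟨hs.1 hv.1, (hs.2.2 v hv.1).symm.trans hv.2⟩
  | .neqc _, _ => fun v hv => ⟨hs.1 hv.1, (hs.2.2 v hv.1) ▸ hv.2⟩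
  | .cmpEq α β, hpos => fun v hv => by
      obtain ⟨a, b, h1, h2, h3⟩ := hv
      refine ⟨a, b, psem_mono H G hs α hpos.1 h1, psem_mono H G hs β hpos.2 h2, ?_⟩
      rw [← hs.2.2 a (psem_bdd H α _ h1).2, ← hs.2.2 b (psem_bdd H β _ h2).2]
      exact h3
  | .cmpNeq α β, hpos => fun v hv => by
      obtain ⟨a, b, h1, h2, h3⟩ := hv
      refine ⟨a, b, psem_mono H G hs α hpos.1 h1, psem_mono H G hs β hpos.2 h2, ?_⟩
      rw [← hs.2.2 a (psem_bdd H α _ h1).2, ← hs.2.2 b (psem_bdd H β _ h2).2]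
      exact h3

end

theorem subgraph_refl (G : DataGraph V E Dv) : G.Subgraph G :=
  ⟨subset_rfl, fun _ _ _ _ => subset_rfl, fun _ _ => rfl⟩

theorem subgraph_trans {A B C : DataGraph V E Dv} (h1 : A.Subgraph B) (h2 : B.Subgraph C) :
    A.Subgraph C :=
  ⟨h1.1.trans h2.1,
   fun v hv w hw => (h1.2.1 v hv w hw).trans (h2.2.1 v (h1.1 hv) w (h1.1 hw)),
   fun v hv => (h1.2.2 v hv).trans (h2.2.2 v (h1.1 hv))⟩

theorem dgStep_subgraph (R : Set (NExp E Dv)) (G : DataGraph V E Dv) :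
    (dgStep R G).Subgraph G :=
  ⟨Set.inter_subset_left, fun _ _ _ _ e he => he.1, fun _ _ => rfl⟩

theorem dgStep_mono (R : Set (NExp E Dv)) (hpos : ∀ φ ∈ R, NExp.Positive φ)
    {A B : DataGraph V E Dv} (hs : A.Subgraph B) :
    (dgStep R A).Subgraph (dgStep R B) := by
  have hnode : (dgStep R A).nodes ⊆ (dgStep R B).nodes := by
    rintro v ⟨hv, hvS⟩
    exact ⟨hs.1 hv, fun φ hφ => nsem_mono A B hs φ (hpos φ hφ) (hvS φ hφ)⟩
  refine ⟨hnode, ?_, ?_⟩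
  · rintro v hv w hw e ⟨he, hvA, hwA⟩
    exact ⟨hs.2.1 v hvA.1 w hwA.1 he, hnode hvA, hnode hwA⟩
  · rintro v hv
    exact hs.2.2 v hv.1

/-- If the node set does not shrink, the step is a fixed point (up to mutual subgraph). -/
theorem dgStep_fixed (R : Set (NExp E Dv)) {G : DataGraph V E Dv}
    (h : (dgStep R G).nodes = G.nodes) : G.Subgraph (dgStep R G) := by
  have hmem : ∀ v ∈ G.nodes, v ∈ (dgStep R G).nodes := fun v hv => h.symm ▸ hv
  refine ⟨h.symm.subset, ?_, fun _ _ => rfl⟩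
  intro v hv w hw e he
  exact ⟨he, hmem v hv, hmem w hw⟩

/-- Any consistent subgraph of `G` stays below every iterate. -/
theorem consistent_below (R : Set (NExp E Dv)) (hpos : ∀ φ ∈ R, NExp.Positive φ)
    {K G : DataGraph V E Dv} (hK : K.Consistent ∅ R) (hKG : K.Subgraph G) :
    ∀ k, K.Subgraph ((dgStep R)^[k] G) := by
  intro k
  induction k with
  | zero => exact hKG
  | succ k ih =>
      rw [Function.iterate_succ_apply']
      set Gk := (dgStep R)^[k] G
      have hnode : K.nodes ⊆ (dgStep R Gk).nodes := by
        intro v hv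
        exact ⟨ih.1 hv, fun φ hφ =>
          nsem_mono K Gk ih φ (hpos φ hφ) (hK.2 φ hφ v hv)⟩
      refine ⟨hnode, ?_, ?_⟩
      · intro v hv w hw e he
        exact ⟨ih.2.1 v hv w hw he, hnode hv, hnode hw⟩
      · intro v hv
        exact ih.2.2 v hv

end Aux

/-- the iterated node-removal sequence stabilizes after at most |V_G|
steps at the unique subset repair of `G` w.r.t. a set of positive node expressions. -/
theorem stmt15 {V E Dv : Type} (G : DataGraph V E Dv) (R : Set (NExp E Dv))
    (hfin : G.nodes.Finite) (hpos : ∀ φ ∈ R, NExp.Positive φ) :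
    (∀ k, hfin.toFinset.card ≤ k →
        ((dgStep R)^[k] G).Subgraph ((dgStep R)^[hfin.toFinset.card] G) ∧
          ((dgStep R)^[hfin.toFinset.card] G).Subgraph ((dgStep R)^[k] G)) ∧
      IsSubsetRepair ((dgStep R)^[hfin.toFinset.card] G) G ∅ R ∧
      ∀ H : DataGraph V E Dv, IsSubsetRepair H G ∅ R →
        H.Subgraph ((dgStep R)^[hfin.toFinset.card] G) ∧
          ((dgStep R)^[hfin.toFinset.card] G).Subgraph H := by
  set N := hfin.toFinset.card with hN
  have hstep_sub : ∀ k, ((dgStep R)^[k+1] G).Subgraph ((dgStep R)^[k] G) := by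
    intro k; rw [Function.iterate_succ_apply']; exact dgStep_subgraph R _
  have hsubG : ∀ k, ((dgStep R)^[k] G).Subgraph G := by
    intro k
    induction k with
    | zero => exact subgraph_refl G
    | succ k ih => exact subgraph_trans (hstep_sub k) ih
  have hfink : ∀ k, ((dgStep R)^[k] G).nodes.Finite := fun k => hfin.subset (hsubG k).1
  have key : ∀ k, (((dgStep R)^[k] G).Subgraph ((dgStep R)^[k+1] G)) ∨
      ((dgStep R)^[k] G).nodes.ncard ≤ N - k := by
    intro k
    induction k with
    | zero =>
        right
        simp only [Function.iterate_zero_apply, Nat.sub_zero]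
        rw [hN]
        exact le_of_eq (Set.ncard_eq_toFinset_card G.nodes hfin)
    | succ k ih =>
        rcases ih with h | h
        · left
          simp only [Function.iterate_succ_apply'] at h ⊢
          exact dgStep_mono R hpos h
        · by_cases hne : ((dgStep R)^[k+1] G).nodes = ((dgStep R)^[k] G).nodes
          · left
            simp only [Function.iterate_succ_apply'] at hne ⊢
            exact dgStep_mono R hpos (dgStep_fixed R hne)
          · right
            have hsub : ((dgStep R)^[k+1] G).nodes ⊂ ((dgStep R)^[k] G).nodes :=
              HasSubset.Subset.ssubset_of_ne (hstep_sub k).1 hne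
            have hlt := Set.ncard_lt_ncard hsub (hfink k)
            omega
  have hNfix : ((dgStep R)^[N] G).Subgraph (dgStep R ((dgStep R)^[N] G)) := by
    rcases key N with h | h
    · rwa [Function.iterate_succ_apply'] at h
    · have hz : ((dgStep R)^[N] G).nodes = ∅ := by
        rw [← Set.ncard_eq_zero (hfink N)]
        omega
      apply dgStep_fixed
      have hsub : (dgStep R ((dgStep R)^[N] G)).nodes ⊆ (∅ : Set V) :=
        hz ▸ (dgStep_subgraph R _).1
      rw [Set.subset_empty_iff.1 hsub, hz]
  have hfixm : ∀ m, (((dgStep R)^[N+m] G).Subgraph ((dgStep R)^[N] G)) ∧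
      (((dgStep R)^[N] G).Subgraph ((dgStep R)^[N+m] G)) := by
    intro m
    induction m with
    | zero => exact ⟨subgraph_refl _, subgraph_refl _⟩
    | succ m ih =>
        have e : N + (m+1) = (N+m) + 1 := rfl
        clear_value N
        constructor
        · rw [e, Function.iterate_succ_apply']
          exact subgraph_trans (dgStep_mono R hpos ih.1) (dgStep_subgraph R _)
        · rw [e, Function.iterate_succ_apply']
          exact subgraph_trans hNfix (dgStep_mono R hpos ih.2)
  have hconsN : ((dgStep R)^[N] G).Consistent ∅ R := by
    constructor
    · intro α hα
      exact absurd hα (Set.notMem_empty α)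
    · intro φ hφ v hv
      have hv' := hNfix.1 hv
      exact hv'.2 φ hφ
  refine ⟨?_, ⟨hconsN, hsubG N, ?_⟩, ?_⟩
  · intro k hk
    obtain ⟨m, rfl⟩ := Nat.exists_eq_add_of_le hk
    exact hfixm m
  · intro K hKc hKG _
    exact consistent_below R hpos hKc hKG N
  · intro H hH
    have h1 : H.Subgraph ((dgStep R)^[N] G) :=
      consistent_below R hpos hH.1 hH.2.1 N
    exact ⟨h1, hH.2.2 _ hconsN (hsubG N) h1⟩
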